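/- arXiv:2106.11519 — 4 statements merged into one kernel-verified Lean document; each statement's English description precedes it below -/
import Mathlib

section
/- Let d ≥ 1 and λ ∈ ℂ^d. For every integer m ≥ 0 and every 1 ≤ k ≤ d, β_{m,k}(λ) = Σ_{j=k}^{d} ((j−1) choose (k−1)) · α_{m+k,j}(λ). -/
/-!
Write `W_M(f) = ∑_{|y| = M} f(#supp y) λ^y` for `f : ℕ → ℂ`, so that
`∑_j f(j) α_{M,j} = W_M(f)` for `M ≥ 1`, and `h_M = W_M(1)` is the complete homogeneous
symmetric polynomial. Adding the indicator of a `k`-set `S` to `y` is a bijection onto the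
tuples of sum `M + k` whose support contains `S`; hence `h_M e_k = W_{M+k}(s ↦ C(s, k))`.
Together with Pascal's rule `C(s, k+1) - C(s-1, k+1) = C(s-1, k)` for `s ≥ 1`, the recursion
for `β` gives by induction on `m` that `β_{m,k+1} = W_{m+k+1}(s ↦ C(s-1, k))`, the base case
being `β_{0,k+1} = h_0 e_{k+1}`.
-/
open Finset

/-- The `k`-th elementary symmetric polynomial of `lam 1, …, lam d`
(with `esymm d lam k = 0` for `k > d`). -/
noncomputable def esymm (d : ℕ) (lam : Fin d → ℂ) (k : ℕ) : ℂ :=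
  ∑ S ∈ Finset.powersetCard k (Finset.univ : Finset (Fin d)), ∏ j ∈ S, lam j

/-- `α_{m,k}(λ)`: the sum over all `y ∈ {0,…,m}^d` with exactly `k` strictly positive
coordinates and total sum `m` of `∏ j, λ_j ^ y_j`. -/
noncomputable def alpha (d : ℕ) (lam : Fin d → ℂ) (m k : ℕ) : ℂ :=
  ∑ y ∈ (Fintype.piFinset fun _ : Fin d => Finset.range (m + 1)).filter
      (fun y => (Finset.univ.filter fun j => 0 < y j).card = k ∧ ∑ j, y j = m),
    ∏ j, lam j ^ y j

/-- `β_{m,k}(λ)`, defined by `β_{0,k} = e_k(λ)` and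
`β_{m,k} = β_{m−1,1}·e_k(λ) − β_{m−1,k+1}` (the convention `β_{m−1,d+1} = 0` is
automatic since `esymm d lam k = 0` for `k > d`, so `β_{m,k} = 0` for `k > d`). -/
noncomputable def betaC (d : ℕ) (lam : Fin d → ℂ) : ℕ → ℕ → ℂ
  | 0, k => esymm d lam k
  | m + 1, k => betaC d lam m 1 * esymm d lam k - betaC d lam m (k + 1)

section

variable {d : ℕ}

def posSupport (y : Fin d → ℕ) : Finset (Fin d) := univ.filter (0 < y ·)

lemma mem_posSupport {y : Fin d → ℕ} {j : Fin d} : j ∈ posSupport y ↔ 0 < y j := by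
  simp [posSupport]

lemma card_posSupport_le_sum (y : Fin d → ℕ) : #(posSupport y) ≤ ∑ j, y j :=
  calc #(posSupport y) = ∑ _ ∈ posSupport y, 1 := card_eq_sum_ones _
    _ ≤ ∑ j ∈ posSupport y, y j := sum_le_sum fun _ hj => mem_posSupport.mp hj
    _ ≤ ∑ j, y j := sum_le_sum_of_subset (subset_univ _)

lemma one_le_card_posSupport {y : Fin d → ℕ} (hy : 1 ≤ ∑ j, y j) :
    1 ≤ #(posSupport y) := by
  obtain ⟨j, -, hj⟩ := exists_ne_zero_of_sum_ne_zero (by omega : ∑ j, y j ≠ 0)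
  exact card_pos.mpr ⟨j, mem_posSupport.mpr (Nat.pos_of_ne_zero hj)⟩

def indicatorTuple (S : Finset (Fin d)) : Fin d → ℕ := fun j => if j ∈ S then 1 else 0

lemma sum_indicatorTuple (S : Finset (Fin d)) : ∑ j, indicatorTuple S j = #S := by
  simp [indicatorTuple]

lemma indicatorTuple_le_iff_subset_posSupport {S : Finset (Fin d)} {z : Fin d → ℕ} :
    indicatorTuple S ≤ z ↔ S ⊆ posSupport z := by
  refine ⟨fun h j hj => mem_posSupport.mpr ?_, fun h j => ?_⟩
  · simpa [indicatorTuple, hj, Nat.succ_le_iff] using h j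
  · by_cases hj : j ∈ S
    · simpa [indicatorTuple, hj, Nat.one_le_iff_ne_zero, Nat.pos_iff_ne_zero]
        using mem_posSupport.mp (h hj)
    · simp [indicatorTuple, hj]

variable (lam : Fin d → ℂ)

def powProd (y : Fin d → ℕ) : ℂ := ∏ j, lam j ^ y j

lemma powProd_add (y z : Fin d → ℕ) : powProd lam (y + z) = powProd lam y * powProd lam z := by
  simp [powProd, pow_add, prod_mul_distrib]

lemma powProd_indicatorTuple (S : Finset (Fin d)) :
    powProd lam (indicatorTuple S) = ∏ j ∈ S, lam j := by
  simp [powProd, indicatorTuple, prod_ite_mem]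

def weightedSum (f : ℕ → ℂ) (M : ℕ) : ℂ :=
  ∑ y ∈ Nat.antidiagonalTuple d M, f #(posSupport y) * powProd lam y

lemma weightedSum_congr {f g : ℕ → ℂ} {M : ℕ} (hM : 1 ≤ M)
    (h : ∀ s ∈ Icc 1 M, f s = g s) : weightedSum lam f M = weightedSum lam g M := by
  refine sum_congr rfl fun y hy => ?_
  rw [Nat.mem_antidiagonalTuple] at hy
  rw [h _ (mem_Icc.mpr ⟨one_le_card_posSupport (hy ▸ hM), hy ▸ card_posSupport_le_sum y⟩)]

lemma weightedSum_sub (f g : ℕ → ℂ) (M : ℕ) :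
    weightedSum lam (fun s => f s - g s) M = weightedSum lam f M - weightedSum lam g M := by
  simp only [weightedSum, sub_mul, sum_sub_distrib]

lemma alpha_eq_sum_filter (M j : ℕ) :
    alpha d lam M j
      = ∑ y ∈ Nat.antidiagonalTuple d M with #(posSupport y) = j, powProd lam y := by
  rw [alpha]
  refine sum_congr ?_ fun _ _ => rfl
  ext y
  simp only [mem_filter, Fintype.mem_piFinset, mem_range, Nat.mem_antidiagonalTuple]
  refine ⟨fun h => ⟨h.2.2, h.2.1⟩, fun h => ⟨fun i => ?_, h.2, h.1⟩⟩
  exact Nat.lt_succ_of_le (h.1 ▸ single_le_sum (fun _ _ => Nat.zero_le _) (mem_univ i))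

lemma sum_Icc_mul_alpha (f : ℕ → ℂ) {M : ℕ} (hM : 1 ≤ M) :
    ∑ j ∈ Icc 1 d, f j * alpha d lam M j = weightedSum lam f M := by
  simp only [alpha_eq_sum_filter, mul_sum]
  rw [weightedSum, ← sum_fiberwise_of_maps_to (g := fun y => #(posSupport y)) (t := Icc 1 d)]
  · exact sum_congr rfl fun j _ => sum_congr rfl fun y hy => by rw [(mem_filter.mp hy).2]
  · intro y hy
    rw [Nat.mem_antidiagonalTuple] at hy
    exact mem_Icc.mpr ⟨one_le_card_posSupport (hy ▸ hM),
      by simpa using card_le_univ (posSupport y)⟩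

lemma sum_powProd_add_indicatorTuple (S : Finset (Fin d)) (M : ℕ) :
    ∑ y ∈ Nat.antidiagonalTuple d M, powProd lam (y + indicatorTuple S)
      = ∑ z ∈ Nat.antidiagonalTuple d (M + #S) with S ⊆ posSupport z, powProd lam z := by
  refine sum_nbij' (· + indicatorTuple S) (· - indicatorTuple S) ?_ ?_ ?_ ?_ fun _ _ => rfl
  · intro y hy
    refine mem_filter.mpr ⟨Nat.mem_antidiagonalTuple.mpr ?_,
      indicatorTuple_le_iff_subset_posSupport.mp le_add_self⟩
    rw [← Nat.mem_antidiagonalTuple.mp hy, ← sum_indicatorTuple, ← sum_add_distrib]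
    rfl
  · intro z hz
    obtain ⟨hz, hS⟩ := mem_filter.mp hz
    have hsum : ∑ j, (z - indicatorTuple S) j + ∑ j, indicatorTuple S j = ∑ j, z j := by
      rw [← sum_add_distrib]
      exact congrArg (fun w => ∑ j, w j)
        (tsub_add_cancel_of_le (indicatorTuple_le_iff_subset_posSupport.mpr hS))
    rw [sum_indicatorTuple, Nat.mem_antidiagonalTuple.mp hz] at hsum
    exact Nat.mem_antidiagonalTuple.mpr (by omega)
  · intro y _
    exact add_tsub_cancel_right y _
  · intro z hz
    exact tsub_add_cancel_of_le (indicatorTuple_le_iff_subset_posSupport.mpr (mem_filter.mp hz).2)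

lemma weightedSum_one_mul_esymm (M k : ℕ) :
    weightedSum lam (fun _ => 1) M * esymm d lam k
      = weightedSum lam (fun s => (s.choose k : ℂ)) (M + k) :=
  calc weightedSum lam (fun _ => 1) M * esymm d lam k
      = ∑ S ∈ powersetCard k univ, ∑ y ∈ Nat.antidiagonalTuple d M,
          powProd lam (y + indicatorTuple S) := by
        simp only [weightedSum, esymm, one_mul, sum_mul_sum, powProd_add, powProd_indicatorTuple]
        exact sum_comm
    _ = ∑ S ∈ powersetCard k univ,
          ∑ z ∈ Nat.antidiagonalTuple d (M + k) with S ⊆ posSupport z, powProd lam z :=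
        sum_congr rfl fun S hS => by
          rw [sum_powProd_add_indicatorTuple, (mem_powersetCard.mp hS).2]
    _ = ∑ z ∈ Nat.antidiagonalTuple d (M + k), ∑ _S ∈ powersetCard k (posSupport z),
          powProd lam z :=
        sum_comm' fun S z => by
          simp only [mem_filter, mem_powersetCard, subset_univ, true_and]
          tauto
    _ = weightedSum lam (fun s => (s.choose k : ℂ)) (M + k) := by
        simp [weightedSum, sum_const, card_powersetCard, nsmul_eq_mul]

lemma weightedSum_choose_sub {M : ℕ} (hM : 1 ≤ M) (k : ℕ) :
    weightedSum lam (fun s => (s.choose (k + 1) : ℂ)) M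
      - weightedSum lam (fun s => ((s - 1).choose (k + 1) : ℂ)) M
      = weightedSum lam (fun s => ((s - 1).choose k : ℂ)) M := by
  rw [← weightedSum_sub]
  refine weightedSum_congr lam hM fun s hs => ?_
  obtain ⟨t, rfl⟩ := Nat.exists_eq_add_of_le' (mem_Icc.mp hs).1
  simp [Nat.choose_succ_succ']

lemma betaC_succ_eq_weightedSum (m k : ℕ) :
    betaC d lam m (k + 1) = weightedSum lam (fun s => ((s - 1).choose k : ℂ)) (m + (k + 1)) := by
  induction m generalizing k with
  | zero =>
    have hvanish : weightedSum lam (fun s => ((s - 1).choose (k + 1) : ℂ)) (k + 1) = 0 := by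
      rw [weightedSum_congr lam (Nat.le_add_left 1 k) (g := fun _ => 0) fun s hs => by
        simp [Nat.choose_eq_zero_of_lt (by grind : s - 1 < k + 1)]]
      simp [weightedSum]
    calc betaC d lam 0 (k + 1) = weightedSum lam (fun _ => 1) 0 * esymm d lam (k + 1) := by
          simp [betaC, weightedSum, Nat.antidiagonalTuple_zero_right, powProd]
      _ = _ := by
          rw [weightedSum_one_mul_esymm, zero_add,
            ← weightedSum_choose_sub lam (Nat.le_add_left 1 k), hvanish, sub_zero]
  | succ m ih =>
    have hfirst : betaC d lam m 1 = weightedSum lam (fun _ => 1) (m + 1) := by simpa using ih 0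
    calc betaC d lam (m + 1) (k + 1)
        = betaC d lam m 1 * esymm d lam (k + 1) - betaC d lam m (k + 1 + 1) := rfl
      _ = weightedSum lam (fun s => (s.choose (k + 1) : ℂ)) (m + 1 + (k + 1))
          - weightedSum lam (fun s => ((s - 1).choose (k + 1) : ℂ)) (m + 1 + (k + 1)) := by
          rw [hfirst, weightedSum_one_mul_esymm, ih,
            show m + (k + 1 + 1) = m + 1 + (k + 1) by omega]
      _ = _ := weightedSum_choose_sub lam (by omega) k

end

theorem beta_eq_sum_alpha_general (d : ℕ) (lam : Fin d → ℂ)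
    (m k : ℕ) (hk1 : 1 ≤ k) :
    betaC d lam m k =
      ∑ j ∈ Finset.Icc k d, ((j - 1).choose (k - 1) : ℂ) * alpha d lam (m + k) j := by
  obtain ⟨k, rfl⟩ := Nat.exists_eq_add_of_le' hk1
  rw [betaC_succ_eq_weightedSum, ← sum_Icc_mul_alpha lam _ (by omega), Nat.add_sub_cancel]
  refine (sum_subset (Icc_subset_Icc_left hk1) fun j hj hj' => ?_).symm
  have : j - 1 < k := by grind
  simp [Nat.choose_eq_zero_of_lt this]

/-- Lemma B.6: relation between the coefficients `β_{m,k}` and `α_{m,k}`. -/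
theorem beta_eq_sum_alpha (d : ℕ) (hd : 1 ≤ d) (lam : Fin d → ℂ)
    (m k : ℕ) (hk1 : 1 ≤ k) (hkd : k ≤ d) :
    betaC d lam m k =
      ∑ j ∈ Finset.Icc k d, ((j - 1).choose (k - 1) : ℂ) * alpha d lam (m + k) j :=
  beta_eq_sum_alpha_general d lam m k hk1
end

section
/- Let d ≥ 1 and let λ, λ̂ ∈ ℂ^d satisfy |λ_k| ≤ 1 and |λ̂_k| ≤ 1 for every k ∈ {1,…,d}. Let R_1, …, R_d and R̃_1, …, R̃_d be given complex numbers, and for every integer h ≥ d+1 define R_h := Σ_{k=1}^{d} (−1)^{k+1} e_k(λ) · R_{h−k} and R̃_h := Σ_{k=1}^{d} (−1)^{k+1} e_k(λ̂) · R̃_{h−k}. Then for every integer h ≥ 3d+1, |R̃_h − R_h| ≤ 2d · (16e·h/d)^{2d} · max_{1 ≤ h' ≤ 3d} |R_{h'} − R̃_{h'}|. -/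
/-!
Write `S` for the shift `f ↦ f (· + 1)` on sequences. The recurrence for `R` says that
`∏ₖ (S - λₖ)` annihilates `n ↦ R (n + 1)`, and likewise for `R̃`; hence the product of the two
operators, a polynomial in `S` of degree `2d` all of whose roots lie in the closed unit disc,
annihilates `Δ n = R̃ (n + 1) - R (n + 1)`. Peeling off one factor `S - μ` at a time, using
`‖g (n + 1)‖ ≤ ‖g n‖ + ‖(S - μ) g n‖` and the hockey-stick identity, gives
`‖Δ n‖ ≤ 2 ^ (2d) M (n + 2d).choose (2d)` with `M` a bound on the first `2d` values of `Δ`, and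
`n.choose k ≤ (e n / k) ^ k` turns this into the stated bound.
-/

open Finset Polynomial

theorem aeval_mul_apply_sub_eq_zero {A M : Type*} [CommRing A] [AddCommGroup M] [Module A M]
    (f : Module.End A M) {p q : A[X]} {u v : M} (hu : aeval f q u = 0) (hv : aeval f p v = 0) :
    aeval f (p * q) (u - v) = 0 := by
  have hpu : aeval f (p * q) u = 0 := by rw [map_mul, Module.End.mul_apply, hu, map_zero]
  have hqv : aeval f (p * q) v = 0 := by
    rw [mul_comm, map_mul, Module.End.mul_apply, hv, map_zero]
  rw [map_sub, hpu, hqv, sub_zero]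

section Shift

variable (A : Type*) [CommRing A]

noncomputable def shiftSeq : Module.End A (ℕ → A) := LinearMap.funLeft A A Nat.succ

variable {A}

@[simp]
theorem shiftSeq_apply (f : ℕ → A) (n : ℕ) : shiftSeq A f n = f (n + 1) := rfl

theorem shiftSeq_pow_apply (i : ℕ) (f : ℕ → A) (n : ℕ) : (shiftSeq A ^ i) f n = f (n + i) := by
  induction i generalizing n with
  | zero => rfl
  | succ i ih =>
    rw [pow_succ', Module.End.mul_apply, shiftSeq_apply, ih, add_right_comm, add_assoc]

theorem aeval_shiftSeq_apply (p : A[X]) (f : ℕ → A) (n : ℕ) :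
    aeval (shiftSeq A) p f n = ∑ i ∈ range (p.natDegree + 1), p.coeff i * f (n + i) := by
  simp [aeval_eq_sum_range, LinearMap.sum_apply, shiftSeq_pow_apply]

theorem aeval_shiftSeq_X_sub_C_apply (μ : A) (f : ℕ → A) (n : ℕ) :
    aeval (shiftSeq A) (X - C μ) f n = f (n + 1) - μ * f n := by
  simp

theorem aeval_shiftSeq_prod_X_sub_C_eq_zero [Nontrivial A] (s : Multiset A) (x : ℕ → A)
    (hx : ∀ n, x (n + Multiset.card s) = ∑ k ∈ Icc 1 (Multiset.card s),
      (-1) ^ (k + 1) * s.esymm k * x (n + Multiset.card s - k)) :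
    aeval (shiftSeq A) (s.map (X - C ·)).prod x = 0 := by
  funext n
  set m := Multiset.card s
  rw [aeval_shiftSeq_apply, natDegree_multiset_prod_X_sub_C_eq_card, Pi.zero_apply]
  calc ∑ i ∈ range (m + 1), (s.map (X - C ·)).prod.coeff i * x (n + i)
      = ∑ k ∈ range (m + 1), (-1) ^ k * s.esymm k * x (n + m - k) := by
        rw [← sum_range_reflect]
        refine sum_congr rfl fun k hk => ?_
        rw [mem_range] at hk
        rw [Multiset.prod_X_sub_C_coeff s (by omega), show m - (m + 1 - 1 - k) = k by omega]
        congr 2; omega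
    _ = x (n + m) - ∑ k ∈ Icc 1 m, (-1) ^ (k + 1) * s.esymm k * x (n + m - k) := by
        rw [sum_range_succ', range_eq_Ico, sum_Ico_add' (f := fun k =>
          (-1) ^ k * s.esymm k * x (n + m - k)), zero_add, Ico_add_one_right_eq_Icc]
        simp [pow_succ, Multiset.esymm, sub_eq_neg_add]
    _ = 0 := by rw [← hx, sub_self]

end Shift

section Bounds

variable {𝕜 : Type*} [NormedCommRing 𝕜]

theorem norm_mul_le_of_norm_le_one {μ : 𝕜} (hμ : ‖μ‖ ≤ 1) (x : 𝕜) : ‖μ * x‖ ≤ ‖x‖ :=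
  (norm_mul_le _ _).trans (mul_le_of_le_one_left (norm_nonneg _) hμ)

theorem norm_le_norm_zero_add_sum_norm_sub_mul {μ : 𝕜} (hμ : ‖μ‖ ≤ 1) (g : ℕ → 𝕜) (n : ℕ) :
    ‖g n‖ ≤ ‖g 0‖ + ∑ t ∈ range n, ‖g (t + 1) - μ * g t‖ := by
  induction n with
  | zero => simp
  | succ n ih =>
    calc ‖g (n + 1)‖ = ‖μ * g n + (g (n + 1) - μ * g n)‖ := by rw [add_sub_cancel]
      _ ≤ ‖g n‖ + ‖g (n + 1) - μ * g n‖ :=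
        (norm_add_le _ _).trans (by gcongr; exact norm_mul_le_of_norm_le_one hμ _)
      _ ≤ _ := by rw [sum_range_succ]; linarith

theorem norm_le_of_aeval_shiftSeq_eq_zero (s : Multiset 𝕜) (hs : ∀ μ ∈ s, ‖μ‖ ≤ 1)
    (f : ℕ → 𝕜) {B : ℝ} (hB0 : 0 ≤ B) (hB : ∀ j < Multiset.card s, ‖f j‖ ≤ B)
    (hf : aeval (shiftSeq 𝕜) (s.map (X - C ·)).prod f = 0) (n : ℕ) :
    ‖f n‖ ≤ 2 ^ Multiset.card s * B * (n + Multiset.card s).choose (Multiset.card s) := by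
  induction s using Multiset.induction_on generalizing f B n with
  | empty => simp_all
  | cons μ s ih =>
    rw [Multiset.card_cons] at hB ⊢
    set k := Multiset.card s
    have hμ : ‖μ‖ ≤ 1 := hs μ (Multiset.mem_cons_self μ s)
    set g := aeval (shiftSeq 𝕜) (X - C μ) f
    have hg_apply : ∀ t, g t = f (t + 1) - μ * f t := aeval_shiftSeq_X_sub_C_apply μ f
    have hg : ∀ t, ‖g t‖ ≤ 2 ^ k * (2 * B) * (t + k).choose k := by
      refine ih (fun ν hν => hs ν (Multiset.mem_cons_of_mem hν)) g (by positivity)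
        (fun j hj => ?_) ?_
      · have hgj : ‖g j‖ ≤ ‖f (j + 1)‖ + ‖f j‖ := by
          rw [hg_apply]
          exact (norm_sub_le _ _).trans (by gcongr; exact norm_mul_le_of_norm_le_one hμ _)
        linarith [hB (j + 1) (by omega), hB j (by omega)]
      · rwa [Multiset.map_cons, Multiset.prod_cons, mul_comm, map_mul, Module.End.mul_apply] at hf
    have hsum : ∑ t ∈ range n, ((t + k).choose k : ℝ) + (n + k).choose k
        = (n + (k + 1)).choose (k + 1) := by
      rw_mod_cast [← sum_range_succ, Nat.sum_range_add_choose]; rfl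
    have hc : (1 : ℝ) ≤ (n + k).choose k := by exact_mod_cast Nat.choose_pos (by omega)
    have h2 : (1 : ℝ) ≤ 2 ^ (k + 1) := one_le_pow₀ one_le_two
    calc ‖f n‖ ≤ ‖f 0‖ + ∑ t ∈ range n, ‖g t‖ := by
          simpa only [hg_apply] using norm_le_norm_zero_add_sum_norm_sub_mul hμ f n
      _ ≤ B + ∑ t ∈ range n, 2 ^ (k + 1) * B * (t + k).choose k := by
          gcongr with t
          · exact hB 0 (by omega)
          · rw [pow_succ]; linarith [hg t]
      _ ≤ 2 ^ (k + 1) * B * (∑ t ∈ range n, ((t + k).choose k : ℝ) + (n + k).choose k) := by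
          rw [← mul_sum, mul_add]
          nlinarith [mul_le_mul h2 hc zero_le_one (by positivity : (0 : ℝ) ≤ 2 ^ (k + 1))]
      _ = _ := by rw [hsum]

end Bounds

theorem Nat.choose_le_exp_one_mul_div_pow (n k : ℕ) :
    (n.choose k : ℝ) ≤ (Real.exp 1 * n / k) ^ k := by
  have hk : (0 : ℝ) < (k : ℝ) ^ k := by
    rcases k.eq_zero_or_pos with rfl | hk
    · simp
    · positivity
  have hfact : (k : ℝ) ^ k ≤ Real.exp 1 ^ k * k.factorial := by
    rw [Real.exp_one_pow, ← div_le_iff₀ (by positivity)]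
    exact Real.pow_div_factorial_le_exp _ (Nat.cast_nonneg k) k
  calc (n.choose k : ℝ) ≤ n ^ k / k.factorial := Nat.choose_le_pow_div k n
    _ ≤ n ^ k * (Real.exp 1 ^ k / k ^ k) := by
      rw [div_eq_mul_inv]
      gcongr
      rw [inv_le_iff_one_le_mul₀ (by positivity), div_mul_eq_mul_div, le_div_iff₀ hk, one_mul]
      exact hfact
    _ = (Real.exp 1 * n / k) ^ k := by rw [div_pow, mul_pow]; ring

theorem two_pow_mul_choose_le (d h : ℕ) (hd : 1 ≤ d) (hdh : d ≤ h) :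
    2 ^ (2 * d) * ((h - 1 + 2 * d).choose (2 * d) : ℝ)
      ≤ 2 * d * (16 * Real.exp 1 * h / d) ^ (2 * d) := by
  calc 2 ^ (2 * d) * ((h - 1 + 2 * d).choose (2 * d) : ℝ)
      ≤ 2 ^ (2 * d) * (Real.exp 1 * ((h - 1 + 2 * d : ℕ) : ℝ) / (2 * d : ℕ)) ^ (2 * d) := by
        gcongr; exact Nat.choose_le_exp_one_mul_div_pow _ _
    _ = (Real.exp 1 * ((h - 1 + 2 * d : ℕ) : ℝ) / d) ^ (2 * d) := by
        rw [← mul_pow]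
        congr 1
        push_cast
        field_simp
    _ ≤ (16 * Real.exp 1 * h / d) ^ (2 * d) := by
        rw [mul_comm 16, mul_assoc]
        gcongr
        exact_mod_cast (by omega : h - 1 + 2 * d ≤ 16 * h)
    _ ≤ 2 * d * (16 * Real.exp 1 * h / d) ^ (2 * d) :=
        le_mul_of_one_le_left (by positivity) (by norm_cast; omega)

theorem esymm_eq_multiset_esymm (d : ℕ) (lam : Fin d → ℂ) (k : ℕ) :
    esymm d lam k = (univ.val.map lam).esymm k :=
  (Finset.esymm_map_val lam univ k).symm

theorem aeval_shiftSeq_prod_eq_zero_of_recurrence (d : ℕ) (lam : Fin d → ℂ) (R : ℕ → ℂ)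
    (hR : ∀ h : ℕ, d + 1 ≤ h →
      R h = ∑ k ∈ Icc 1 d, (-1 : ℂ) ^ (k + 1) * esymm d lam k * R (h - k)) :
    aeval (shiftSeq ℂ) ((univ.val.map lam).map (X - C ·)).prod (fun n => R (n + 1)) = 0 := by
  refine aeval_shiftSeq_prod_X_sub_C_eq_zero _ _ fun n => ?_
  simp only [Multiset.card_map, card_val, card_univ, Fintype.card_fin, ← esymm_eq_multiset_esymm]
  rw [hR _ (by omega)]
  refine sum_congr rfl fun k hk => ?_
  rw [mem_Icc] at hk
  congr 2; omega

/-- Lemma 4.4: error propagation bound for order-`d` autoregressions. -/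
theorem error_propagation_bound (d : ℕ) (hd : 1 ≤ d) (lam lamh : Fin d → ℂ)
    (hlam : ∀ k, ‖lam k‖ ≤ 1) (hlamh : ∀ k, ‖lamh k‖ ≤ 1)
    (R Rt : ℕ → ℂ)
    (hR : ∀ h : ℕ, d + 1 ≤ h →
      R h = ∑ k ∈ Finset.Icc 1 d, (-1 : ℂ) ^ (k + 1) * esymm d lam k * R (h - k))
    (hRt : ∀ h : ℕ, d + 1 ≤ h →
      Rt h = ∑ k ∈ Finset.Icc 1 d, (-1 : ℂ) ^ (k + 1) * esymm d lamh k * Rt (h - k)) :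
    ∀ h : ℕ, 3 * d + 1 ≤ h →
      ‖Rt h - R h‖ ≤
        2 * (d : ℝ) * (16 * Real.exp 1 * (h : ℝ) / (d : ℝ)) ^ (2 * d) *
          (Finset.Icc 1 (3 * d)).sup' (Finset.nonempty_Icc.mpr (by omega))
            (fun h' => ‖R h' - Rt h'‖) := by
  intro h hh
  set M := (Finset.Icc 1 (3 * d)).sup' (Finset.nonempty_Icc.mpr (by omega))
    (fun h' => ‖R h' - Rt h'‖)
  set s := univ.val.map lam + univ.val.map lamh
  set x : ℕ → ℂ := (fun n => Rt (n + 1)) - fun n => R (n + 1)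
  have hs : Multiset.card s = 2 * d := by simp [s]; omega
  have hroots : ∀ μ ∈ s, ‖μ‖ ≤ 1 := by
    simp only [s, Multiset.mem_add, Multiset.mem_map]
    rintro _ (⟨i, -, rfl⟩ | ⟨i, -, rfl⟩)
    exacts [hlam i, hlamh i]
  have hx : aeval (shiftSeq ℂ) (s.map (X - C ·)).prod x = 0 := by
    rw [Multiset.map_add, Multiset.prod_add]
    exact aeval_mul_apply_sub_eq_zero _ (aeval_shiftSeq_prod_eq_zero_of_recurrence d lamh Rt hRt)
      (aeval_shiftSeq_prod_eq_zero_of_recurrence d lam R hR)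
  have hinit : ∀ j < Multiset.card s, ‖x j‖ ≤ M := fun j hj => by
    rw [show x j = Rt (j + 1) - R (j + 1) from rfl, norm_sub_rev]
    exact le_sup' (fun h' => ‖R h' - Rt h'‖) (mem_Icc.mpr ⟨by omega, by omega⟩)
  have hM : 0 ≤ M := (norm_nonneg _).trans (hinit 0 (by omega))
  have hbound := norm_le_of_aeval_shiftSeq_eq_zero s hroots x hM hinit hx (h - 1)
  rw [hs, mul_right_comm] at hbound
  calc ‖Rt h - R h‖ = ‖x (h - 1)‖ := by simp [x, Nat.sub_add_cancel (by omega : 1 ≤ h)]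
    _ ≤ 2 ^ (2 * d) * (h - 1 + 2 * d).choose (2 * d) * M := hbound
    _ ≤ 2 * d * (16 * Real.exp 1 * h / d) ^ (2 * d) * M :=
      mul_le_mul_of_nonneg_right (two_pow_mul_choose_le d h hd (by omega)) hM
end

section
/- Let d ≥ 1, let λ̂ ∈ ℂ^d, and let R̂_1, …, R̂_{3d} ∈ ℂ be given. For 1 ≤ m ≤ 2d define Δ̂_m := Σ_{k=1}^{d} (−1)^{k+1} e_k(λ̂) · R̂_{d+m−k} − R̂_{d+m}. Define R̃_h := R̂_h for 1 ≤ h ≤ d and R̃_h := Σ_{k=1}^{d} (−1)^{k+1} e_k(λ̂) · R̃_{h−k} for h ≥ d+1. Then for every 1 ≤ m ≤ 2d, R̃_{d+m} − R̂_{d+m} = Δ̂_m + Σ_{i=1}^{m−1} β_{i−1,1}(λ̂) · Δ̂_{m−i}. -/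
/-!
Write `a_k = (-1)^(k+1) e_k(λ̂)` and `D_m = R̃_{d+m} - R̂_{d+m}`. Subtracting the definition of `Δ̂_m`
from the recursion for `R̃` shows that `D` obeys the same autoregression, driven by the residuals:
`D_m = Δ̂_m + ∑_{1 ≤ k < m} a_k D_{m-k}`, the terms with `k ≥ m` dropping out because `R̃ = R̂` on
the initial window. Hence `D` is the convolution of `Δ̂` with the impulse response `c` of the
recurrence, `c_n = a_n + ∑_{1 ≤ k < n} a_k c_{n-k}`, and unrolling the recursion defining `β`
shows that `c_n = β_{n-1,1}`.
-/

open Finset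

theorem esymm_eq_zero_of_lt {d : ℕ} (lam : Fin d → ℂ) {k : ℕ} (h : d < k) :
    esymm d lam k = 0 := by
  rw [esymm, powersetCard_eq_empty.2 (by simpa using h), sum_empty]

theorem eq_add_sum_mul_of_recurrence {R : Type*} [Semiring R] {a c D Δ : ℕ → R}
    (hc : ∀ n, 1 ≤ n → c n = a n + ∑ k ∈ Ico 1 n, a k * c (n - k))
    (hD : ∀ m, 1 ≤ m → D m = Δ m + ∑ k ∈ Ico 1 m, a k * D (m - k)) (m : ℕ) (hm : 1 ≤ m) :
    D m = Δ m + ∑ j ∈ Ico 1 m, c j * Δ (m - j) := by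
  induction m using Nat.strong_induction_on with
  | _ m ih =>
  have hswap : ∑ k ∈ Ico 1 m, ∑ i ∈ Ico 1 (m - k), a k * c i * Δ (m - k - i)
      = ∑ j ∈ Ico 1 m, ∑ k ∈ Ico 1 j, a k * c (j - k) * Δ (m - j) := by
    rw [sum_comm' (s := Ico 1 m) (t := fun j => Ico 1 j) (t' := Ico 1 m)
      (s' := fun k => Ico (k + 1) m) (fun j k => by simp only [mem_Ico]; omega)]
    refine sum_congr rfl fun k _ => ?_
    rw [sum_Ico_eq_sum_range, sum_Ico_eq_sum_range, Nat.sub_sub]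
    refine sum_congr rfl fun i _ => ?_
    rw [show k + 1 + i - k = 1 + i by omega, Nat.sub_sub, add_assoc]
  calc D m
        = Δ m + ∑ k ∈ Ico 1 m, a k * (Δ (m - k) + ∑ i ∈ Ico 1 (m - k), c i * Δ (m - k - i)) := by
        rw [hD m hm]
        congr 1
        refine sum_congr rfl fun k hk => ?_
        rw [mem_Ico] at hk
        rw [ih (m - k) (by omega) (by omega)]
    _ = Δ m + (∑ k ∈ Ico 1 m, a k * Δ (m - k) +
          ∑ k ∈ Ico 1 m, ∑ i ∈ Ico 1 (m - k), a k * c i * Δ (m - k - i)) := by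
        simp only [mul_add, mul_sum, mul_assoc, sum_add_distrib]
    _ = Δ m + ∑ j ∈ Ico 1 m, c j * Δ (m - j) := by
        rw [hswap, ← sum_add_distrib]
        congr 1
        refine sum_congr rfl fun j hj => ?_
        rw [hc j (mem_Ico.1 hj).1, add_mul, sum_mul]

theorem betaC_eq_sum (d : ℕ) (lam : Fin d → ℂ) (m j : ℕ) :
    betaC d lam m j = (-1) ^ m * esymm d lam (j + m) +
      ∑ i ∈ range m, (-1) ^ i * esymm d lam (j + i) * betaC d lam (m - 1 - i) 1 := by
  induction m generalizing j with
  | zero => simp [betaC]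
  | succ m ih =>
    rw [betaC, ih (j + 1), sum_range_succ']
    have hterm : ∀ i ∈ range m, (-1) ^ (i + 1) * esymm d lam (j + (i + 1)) *
        betaC d lam (m + 1 - 1 - (i + 1)) 1 =
          -((-1) ^ i * esymm d lam (j + 1 + i) * betaC d lam (m - 1 - i) 1) := by
      intro i _
      rw [show m + 1 - 1 - (i + 1) = m - 1 - i by omega, show j + (i + 1) = j + 1 + i by omega]
      ring
    rw [sum_congr rfl hterm, sum_neg_distrib, show j + 1 + m = j + (m + 1) by omega]
    simp only [pow_succ, pow_zero, add_zero, Nat.add_sub_cancel, Nat.sub_zero]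
    ring

theorem betaC_pred_one_eq_sum (d : ℕ) (lam : Fin d → ℂ) (n : ℕ) (hn : 1 ≤ n) :
    betaC d lam (n - 1) 1 = (-1) ^ (n + 1) * esymm d lam n +
      ∑ k ∈ Ico 1 n, (-1) ^ (k + 1) * esymm d lam k * betaC d lam (n - k - 1) 1 := by
  obtain ⟨n, rfl⟩ : ∃ n', n = n' + 1 := ⟨n - 1, by omega⟩
  rw [betaC_eq_sum, sum_Ico_eq_sum_range, Nat.add_sub_cancel, add_comm 1 n, pow_succ, pow_succ]
  congr 1
  · ring
  refine sum_congr rfl fun i _ => ?_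
  rw [show n + 1 - (1 + i) - 1 = n - 1 - i by omega]
  ring

theorem extrapolation_sub_data_recurrence (d : ℕ) (lam : Fin d → ℂ) (Rh Δ Rt : ℕ → ℂ)
    (hΔ : ∀ m : ℕ, Δ m =
      (∑ k ∈ Icc 1 d, (-1 : ℂ) ^ (k + 1) * esymm d lam k * Rh (d + m - k)) - Rh (d + m))
    (hRt1 : ∀ h : ℕ, 1 ≤ h → h ≤ d → Rt h = Rh h)
    (hRt2 : ∀ h : ℕ, d + 1 ≤ h →
      Rt h = ∑ k ∈ Icc 1 d, (-1 : ℂ) ^ (k + 1) * esymm d lam k * Rt (h - k))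
    (m : ℕ) (hm : 1 ≤ m) :
    Rt (d + m) - Rh (d + m) = Δ m + ∑ k ∈ Ico 1 m,
      (-1 : ℂ) ^ (k + 1) * esymm d lam k * (Rt (d + (m - k)) - Rh (d + (m - k))) := by
  have hsplit : Rt (d + m) - Rh (d + m) = Δ m + ∑ k ∈ Icc 1 d,
      (-1 : ℂ) ^ (k + 1) * esymm d lam k * (Rt (d + m - k) - Rh (d + m - k)) := by
    rw [hRt2 _ (by omega), hΔ m]
    simp only [mul_sub, sum_sub_distrib]
    ring
  rw [hsplit]
  congr 1
  calc _ = ∑ k ∈ Icc 1 d ∩ Ico 1 m,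
        (-1 : ℂ) ^ (k + 1) * esymm d lam k * (Rt (d + m - k) - Rh (d + m - k)) := by
        refine (sum_subset inter_subset_left fun k hk hkm => ?_).symm
        simp only [mem_inter, mem_Icc, mem_Ico] at hk hkm
        rw [hRt1 _ (by omega) (by omega), sub_self, mul_zero]
    _ = ∑ k ∈ Icc 1 d ∩ Ico 1 m,
        (-1 : ℂ) ^ (k + 1) * esymm d lam k * (Rt (d + (m - k)) - Rh (d + (m - k))) := by
        refine sum_congr rfl fun k hk => ?_
        simp only [mem_inter, mem_Icc, mem_Ico] at hk
        rw [Nat.add_sub_assoc hk.2.2.le]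
    _ = _ := by
        refine sum_subset inter_subset_right fun k hk hkd => ?_
        simp only [mem_inter, mem_Icc, mem_Ico] at hk hkd
        rw [esymm_eq_zero_of_lt lam (by omega), mul_zero, zero_mul]

theorem extrapolation_deviation_identity_general (d : ℕ) (lamh : Fin d → ℂ)
    (Rh : ℕ → ℂ) (Δ : ℕ → ℂ)
    (hΔ : ∀ m : ℕ, Δ m =
      (∑ k ∈ Finset.Icc 1 d, (-1 : ℂ) ^ (k + 1) * esymm d lamh k * Rh (d + m - k)) -
        Rh (d + m))
    (Rt : ℕ → ℂ)
    (hRt1 : ∀ h : ℕ, 1 ≤ h → h ≤ d → Rt h = Rh h)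
    (hRt2 : ∀ h : ℕ, d + 1 ≤ h →
      Rt h = ∑ k ∈ Finset.Icc 1 d, (-1 : ℂ) ^ (k + 1) * esymm d lamh k * Rt (h - k)) :
    ∀ m : ℕ, 1 ≤ m → m ≤ 2 * d →
      Rt (d + m) - Rh (d + m) =
        Δ m + ∑ i ∈ Finset.Icc 1 (m - 1), betaC d lamh (i - 1) 1 * Δ (m - i) := by
  intro m hm _
  rw [eq_add_sum_mul_of_recurrence (c := fun n => betaC d lamh (n - 1) 1)
    (betaC_pred_one_eq_sum d lamh)
    (extrapolation_sub_data_recurrence d lamh Rh Δ Rt hΔ hRt1 hRt2) m hm,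
    ← Ico_add_one_right_eq_Icc, Nat.sub_add_cancel hm]

/-- Identity from the proof of Lemma C.4: the deviation of the extrapolated
autoregression `R̃` from the data `R̂` is expressed in terms of the residuals `Δ̂` of
the autoregression fit. -/
theorem extrapolation_deviation_identity (d : ℕ) (hd : 1 ≤ d) (lamh : Fin d → ℂ)
    (Rh : ℕ → ℂ) (Δ : ℕ → ℂ)
    (hΔ : ∀ m : ℕ, Δ m =
      (∑ k ∈ Finset.Icc 1 d, (-1 : ℂ) ^ (k + 1) * esymm d lamh k * Rh (d + m - k)) -
        Rh (d + m))
    (Rt : ℕ → ℂ)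
    (hRt1 : ∀ h : ℕ, 1 ≤ h → h ≤ d → Rt h = Rh h)
    (hRt2 : ∀ h : ℕ, d + 1 ≤ h →
      Rt h = ∑ k ∈ Finset.Icc 1 d, (-1 : ℂ) ^ (k + 1) * esymm d lamh k * Rt (h - k)) :
    ∀ m : ℕ, 1 ≤ m → m ≤ 2 * d →
      Rt (d + m) - Rh (d + m) =
        Δ m + ∑ i ∈ Finset.Icc 1 (m - 1), betaC d lamh (i - 1) 1 * Δ (m - i) :=
  extrapolation_deviation_identity_general d lamh Rh Δ hΔ Rt hRt1 hRt2
end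

section
/- Let p ∈ [0,1] and let d, h be integers with 1 ≤ d ≤ h. Then Σ_{i=d}^{h} ((i−1) choose (d−1)) · p^{d−1} · (1−p)^{i−d} ≤ (h−d+1) · (2·p·e·h/d)^{d−1}. -/
/-!
Each term is at most `C(h-1, d-1) p^(d-1)`, since `C(i-1, d-1)` grows with `i` and
`(1-p)^(i-d) ≤ 1`; there are `h-d+1` terms. The binomial coefficient is then bounded by
`C(n, k) ≤ n^k / k! ≤ (e n / k)^k`, using `k^k / k! ≤ e^k`, and `1/(d-1) ≤ 2/d` absorbs the shift
from `d - 1` to `d`.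
-/

open Finset Real

theorem pow_div_factorial_le_exp_one_pow (k : ℕ) : (k : ℝ) ^ k / k.factorial ≤ exp 1 ^ k := by
  rw [← exp_nat_mul, mul_one]
  exact pow_div_factorial_le_exp _ k.cast_nonneg k

theorem Nat.choose_le_exp_mul_div_pow (n k : ℕ) : (n.choose k : ℝ) ≤ (exp 1 * n / k) ^ k := by
  rcases k.eq_zero_or_pos with rfl | hk
  · simp
  have hk' : (0 : ℝ) < k := by exact_mod_cast hk
  calc (n.choose k : ℝ) ≤ (n : ℝ) ^ k / k.factorial := Nat.choose_le_pow_div k n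
    _ = ((k : ℝ) ^ k / k.factorial) * (n / k) ^ k := by
        rw [div_pow]; field_simp
    _ ≤ exp 1 ^ k * (n / k) ^ k := by gcongr; exact pow_div_factorial_le_exp_one_pow k
    _ = (exp 1 * n / k) ^ k := by rw [← mul_pow, mul_div_assoc]

theorem Nat.choose_pred_le_two_exp_mul_div_pow (n d : ℕ) :
    ((n - 1).choose (d - 1) : ℝ) ≤ (2 * exp 1 * n / d) ^ (d - 1) := by
  rcases d with _ | _ | k
  · simp
  · simp
  have hshift : exp 1 * ((n - 1 : ℕ) : ℝ) / (k + 1 : ℕ) ≤ 2 * exp 1 * n / (k + 2 : ℕ) := by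
    have hn : ((n - 1 : ℕ) : ℝ) ≤ n := by exact_mod_cast n.sub_le 1
    rw [div_le_div_iff₀ (by positivity) (by positivity)]
    push_cast
    have he := (exp_pos 1).le
    have hk : (0 : ℝ) ≤ k := k.cast_nonneg
    nlinarith [mul_le_mul_of_nonneg_left hn he, mul_nonneg he (n.cast_nonneg (α := ℝ))]
  calc ((n - 1).choose (k + 1) : ℝ)
      ≤ (exp 1 * ((n - 1 : ℕ) : ℝ) / (k + 1 : ℕ)) ^ (k + 1) := Nat.choose_le_exp_mul_div_pow _ _
    _ ≤ (2 * exp 1 * n / (k + 2 : ℕ)) ^ (k + 1) := by gcongr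

theorem choose_mul_pow_mul_one_sub_pow_le {p : ℝ} (hp0 : 0 ≤ p) (hp1 : p ≤ 1) {m n : ℕ}
    (hmn : m ≤ n) (k j : ℕ) :
    (m.choose k : ℝ) * p ^ k * (1 - p) ^ j ≤ n.choose k * p ^ k := by
  calc (m.choose k : ℝ) * p ^ k * (1 - p) ^ j ≤ m.choose k * p ^ k * 1 := by
        gcongr; exact pow_le_one₀ (by linarith) (by linarith)
    _ ≤ n.choose k * p ^ k := by rw [mul_one]; gcongr

theorem negative_binomial_tail_bound_general (p : ℝ) (hp0 : 0 ≤ p) (hp1 : p ≤ 1)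
    (d h : ℕ) :
    ∑ i ∈ Finset.Icc d h, ((i - 1).choose (d - 1) : ℝ) * p ^ (d - 1) * (1 - p) ^ (i - d) ≤
      ((h - d + 1 : ℕ) : ℝ) * (2 * p * Real.exp 1 * (h : ℝ) / (d : ℝ)) ^ (d - 1) := by
  have hcard : (#(Icc d h) : ℝ) ≤ (h - d + 1 : ℕ) := by
    rw [Nat.card_Icc]; exact_mod_cast (by omega : h + 1 - d ≤ h - d + 1)
  calc ∑ i ∈ Icc d h, ((i - 1).choose (d - 1) : ℝ) * p ^ (d - 1) * (1 - p) ^ (i - d)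
      ≤ ∑ _i ∈ Icc d h, ((h - 1).choose (d - 1) : ℝ) * p ^ (d - 1) :=
        sum_le_sum fun i hi ↦ choose_mul_pow_mul_one_sub_pow_le hp0 hp1
          (by have := (mem_Icc.mp hi).2; omega) _ _
    _ = #(Icc d h) * (((h - 1).choose (d - 1) : ℝ) * p ^ (d - 1)) := by
        rw [sum_const, nsmul_eq_mul]
    _ ≤ (h - d + 1 : ℕ) * ((2 * exp 1 * h / d) ^ (d - 1) * p ^ (d - 1)) := by
        gcongr; exact Nat.choose_pred_le_two_exp_mul_div_pow h d
    _ = (h - d + 1 : ℕ) * (2 * p * exp 1 * h / d) ^ (d - 1) := by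
        rw [← mul_pow]; ring_nf

/-- Lemma F.7 (`G_lb`): bound on the probability that a negative-binomial random
variable (first time `d−1` successes occur among Bernoulli(`p`) trials) is at most `h`. -/
theorem negative_binomial_tail_bound (p : ℝ) (hp0 : 0 ≤ p) (hp1 : p ≤ 1)
    (d h : ℕ) (hd : 1 ≤ d) (hdh : d ≤ h) :
    ∑ i ∈ Finset.Icc d h, ((i - 1).choose (d - 1) : ℝ) * p ^ (d - 1) * (1 - p) ^ (i - d) ≤
      ((h - d + 1 : ℕ) : ℝ) * (2 * p * Real.exp 1 * (h : ℝ) / (d : ℝ)) ^ (d - 1) :=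
  negative_binomial_tail_bound_general p hp0 hp1 d h
end
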